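/- arXiv:1212.0137 — 5 statements merged into one kernel-verified Lean document; each statement's English description precedes it below -/
import Mathlib

section
/- There exists a nonzero polynomial f ∈ ℂ[y] such that for every j ∈ {1,…,k}, the rational function of t = q^γ obtained by applying f(L^{δ_j}) to φ^{(j)}(λ_γ) is identically zero (equivalently, f(L_γ) annihilates each ψ^{(j)}_γ = φ^{(j)}(λ_γ)/ξ^{δ_j}_γ, so f(L_γ)W = {0} for the span W of ψ^{(1)},…,ψ^{(k)}). Moreover, for every integer N ≥ deg f there exists such a polynomial of degree exactly N; in particular the algebra 𝔄_z = {f ∈ ℂ[z+1/z] : f(L_γ)W ⊆ W} contains a polynomial of every sufficiently large degree. (Proposition 4.1.) -/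
/-
Write `λ = λ(t)`, `λ₊ = λ(qt)`, `λ₋ = λ(t/q)`. Both `λ₊ + λ₋` and `λ₊ λ₋` are polynomials in `λ`,
and so are the two combinations `A (λ₊ - λ) + C (λ₋ - λ)` and `(A + C) (λ₊ - λ) (λ - λ₋)` of the
coefficients of `L^a`; hence `A (λ₊ ^ m - λ ^ m) + C (λ₋ ^ m - λ ^ m)` obeys a three-term recurrence
in `m` and is a polynomial of degree `≤ m` in `λ`. So `L^a` acts on `ℂ[λ]` as an operator preserving
the degree filtration, and the product of the `X - ε` over its first `n` diagonal entries `ε`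
annihilates all polynomials of degree `< n`. Since `λ` only depends on `abcd`, the same holds for `L^b, L^c, L^d`;
the product of the four annihilators, times any power of `X`, is the required polynomial.
-/

open scoped BigOperators

namespace AW

noncomputable section

/-- q-shifted factorial `(u;q)_n`. -/
def qpoch (q u : ℂ) (n : ℕ) : ℂ := ∏ l ∈ Finset.range n, (1 - u * q ^ l)

/-- `(u;q)_∞`. -/
def qpochInf (q u : ℂ) : ℂ := ∏' l : ℕ, (1 - u * q ^ l)

/-- Askey–Wilson polynomial `p_n(x;a,b,c,d)` as a function of `z`, `x = (z+1/z)/2`. -/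
def awP (q a b c d : ℂ) (n : ℕ) (z : ℂ) : ℂ :=
  qpoch q (a * b) n * qpoch q (a * c) n * qpoch q (a * d) n / a ^ n *
    ∑ l ∈ Finset.range (n + 1),
      qpoch q (q ^ (-(n : ℤ))) l * qpoch q (a * b * c * d * q ^ ((n : ℤ) - 1)) l *
          qpoch q (a * z) l * qpoch q (a / z) l * q ^ l /
        (qpoch q (a * b) l * qpoch q (a * c) l * qpoch q (a * d) l * qpoch q q l)

/-- `λ_n = (q^{-n}-1)(1-abcd q^{n-1})`. -/
def lamn (q a b c d : ℂ) (n : ℤ) : ℂ := (q ^ (-n) - 1) * (1 - a * b * c * d * q ^ (n - 1))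

/-- `λ_γ` as a rational function of `t = q^γ`. -/
def lamt (q a b c d t : ℂ) : ℂ := (1 / t - 1) * (1 - a * b * c * d * t / q)

/-- `ξ^a_n`. -/
def xiA (q a b c d : ℂ) (n : ℕ) : ℂ :=
  q ^ n * qpoch q (a * b * c * d / q) n /
    (a ^ n * (qpoch q (b * c) n * qpoch q (b * d) n * qpoch q (c * d) n * qpoch q q n))

/-- `ξ^{δ}_n`, where `δ : Fin 4` encodes which of `a,b,c,d` is distinguished. -/
def xiD (q a b c d : ℂ) (δ : Fin 4) (n : ℕ) : ℂ :=
  match δ with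
  | ⟨0, _⟩ => xiA q a b c d n
  | ⟨1, _⟩ => xiA q b c d a n
  | ⟨2, _⟩ => xiA q c d a b n
  | ⟨3, _⟩ => xiA q d a b c n

/-- `ξ^a_m p_m(x)` with the convention that it vanishes for negative `m`. -/
def xiP (q a b c d : ℂ) (m : ℤ) (z : ℂ) : ℂ :=
  if 0 ≤ m then xiA q a b c d m.toNat * awP q a b c d m.toNat z else 0

/-- `A^a_γ` as a rational function of `t = q^γ`. -/
def Acoef (q a b c d t : ℂ) : ℂ :=
  a * (1 - b * c * t) * (1 - b * d * t) * (1 - c * d * t) * (1 - q * t) /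
    (q * (1 - a * b * c * d * t ^ 2 / q) * (1 - a * b * c * d * t ^ 2))

/-- `C^a_γ` as a rational function of `t = q^γ`. -/
def Ccoef (q a b c d t : ℂ) : ℂ :=
  q * (1 - a * b * c * d * t / q ^ 2) * (1 - a * b * t / q) * (1 - a * c * t / q) *
      (1 - a * d * t / q) /
    (a * (1 - a * b * c * d * t ^ 2 / q ^ 2) * (1 - a * b * c * d * t ^ 2 / q))

/-- `B^a_γ` as a rational function of `t = q^γ`. -/
def Bcoef (q a b c d t : ℂ) : ℂ := a / q + q / a - Acoef q a b c d t - Ccoef q a b c d t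

/-- The operator `L^a` acting on functions of `t = q^γ`. -/
def Lop (q a b c d : ℂ) (r : ℂ → ℂ) : ℂ → ℂ := fun t =>
  Acoef q a b c d t * r (q * t) + Bcoef q a b c d t * r t + Ccoef q a b c d t * r (t / q)

/-- `L^{δ}` for `δ ∈ {a,b,c,d}`. -/
def LopD (q a b c d : ℂ) (δ : Fin 4) : (ℂ → ℂ) → ℂ → ℂ :=
  match δ with
  | ⟨0, _⟩ => Lop q a b c d
  | ⟨1, _⟩ => Lop q b c d a
  | ⟨2, _⟩ => Lop q c d a b
  | ⟨3, _⟩ => Lop q d a b c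

/-- `f(L)` applied to a function `r` of `t = q^γ`. -/
def polyLop (L : (ℂ → ℂ) → ℂ → ℂ) (f : Polynomial ℂ) (r : ℂ → ℂ) : ℂ → ℂ := fun t =>
  ∑ i ∈ Finset.range (f.natDegree + 1), f.coeff i * (L^[i] r) t

/-- `κ^{b;i,j}_n` as a Laurent polynomial in `t = q^n` (paper indexing `1 ≤ i, j ≤ k`). -/
def kapB (q a b c d : ℂ) (k i j : ℕ) (t : ℂ) : ℂ :=
  t ^ (-((k : ℤ) - 1)) * (b / a) ^ ((j : ℤ) - (i : ℤ)) *
    (qpoch q (a * c * t * q ^ (1 - (k : ℤ))) (k - i) *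
      qpoch q (a * d * t * q ^ (1 - (k : ℤ))) (k - i)) *
    (qpoch q (b * c * t * q ^ (1 - (i : ℤ))) (i - 1) *
      qpoch q (b * d * t * q ^ (1 - (i : ℤ))) (i - 1))

/-- `κ^{δ_j;i,j}_n`; equal to `1` when `δ_j = a`. -/
def kapD (q a b c d : ℂ) (δ : Fin 4) (k i j : ℕ) (t : ℂ) : ℂ :=
  match δ with
  | ⟨0, _⟩ => 1
  | ⟨1, _⟩ => kapB q a b c d k i j t
  | ⟨2, _⟩ => kapB q a c b d k i j t
  | ⟨3, _⟩ => kapB q a d c b k i j t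

/-- `τ_n` as a Laurent polynomial in `t = q^n`. -/
def tauF (q a b c d : ℂ) (k : ℕ) (φ : Fin k → Polynomial ℂ) (δ : Fin k → Fin 4) (t : ℂ) : ℂ :=
  Matrix.det (Matrix.of fun i j : Fin k =>
    kapD q a b c d (δ j) k ((i : ℕ) + 1) ((j : ℕ) + 1) t *
      Polynomial.eval (lamt q a b c d (t * q ^ (-(i : ℤ)))) (φ j))

/-- `p̂_n` as a function of `z`, `x = (z+1/z)/2`. -/
def phat (q a b c d : ℂ) (k : ℕ) (φ : Fin k → Polynomial ℂ) (δ : Fin k → Fin 4)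
    (n : ℕ) (z : ℂ) : ℂ :=
  Matrix.det (Matrix.of fun i j : Fin (k + 1) =>
    if hj : (j : ℕ) < k then
      kapD q a b c d (δ ⟨j, hj⟩) k ((i : ℕ) + 1) ((j : ℕ) + 1) (q ^ (n : ℕ)) *
        Polynomial.eval (lamn q a b c d ((n : ℤ) - (i : ℕ))) (φ ⟨j, hj⟩)
    else xiP q a b c d ((n : ℤ) - (i : ℕ)) z)

/-- the functions `n ↦ ψ^{(j)}_n = φ^{(j)}(λ_n)/ξ^{δ_j}_n` on `ℕ`. -/
def psiF (q a b c d : ℂ) (k : ℕ) (φ : Fin k → Polynomial ℂ) (δ : Fin k → Fin 4)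
    (j : Fin k) : ℕ → ℂ := fun n =>
  Polynomial.eval (lamn q a b c d n) (φ j) / xiD q a b c d (δ j) n

/-- a function `ℂ∖{0} → ℂ` given by a Laurent polynomial. -/
def IsLaurentFun (f : ℂ → ℂ) : Prop :=
  ∃ (p : Polynomial ℂ) (m : ℕ), ∀ t : ℂ, t ≠ 0 → f t = Polynomial.eval t p / t ^ m

/-- half-integer `λ_{n-j/2}` as a Laurent polynomial in `t = q^n`, where `q2 = q^{1/2}`. -/
def lamHalf (abcd q2 : ℂ) (j : ℤ) (t : ℂ) : ℂ :=
  (q2 ^ j / t - 1) * (1 - abcd * q2 ^ (-j - 2) * t)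

/-- `ε^{(r)}_n` as a Laurent polynomial in `t = q^n`. -/
def epsF (abcd q2 : ℂ) (r : ℕ) (t : ℂ) : ℂ :=
  if r % 4 = 0 ∨ r % 4 = 1 then 1
  else lamHalf abcd q2 ((r : ℤ) - 2) t - lamHalf abcd q2 (r : ℤ) t

end

end AW

open AW

open Polynomial

section Triangular

variable {R : Type*} [CommRing R] (M : Module.End R R[X])

theorem Module.End.sub_coeff_smul_mem_degreeLT (hM : ∀ m, M (X ^ m) ∈ R[X]_(m + 1))
    {n : ℕ} {p : R[X]} (hp : p ∈ R[X]_(n + 1)) :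
    M p - (M (X ^ n)).coeff n • p ∈ R[X]_n := by
  classical
  set T : Module.End R R[X] := M - (M (X ^ n)).coeff n • 1
  change p ∈ (R[X]_n).comap T
  revert p
  rw [← SetLike.le_def, degreeLT_eq_span_X_pow, Submodule.span_le, Finset.coe_image]
  rintro _ ⟨m, hm, rfl⟩
  simp only [Finset.coe_range, Set.mem_Iio] at hm
  simp only [SetLike.mem_coe, Submodule.mem_comap, T, LinearMap.sub_apply, LinearMap.smul_apply,
    Module.End.one_apply]
  rcases (Nat.lt_succ_iff.mp hm).lt_or_eq with hlt | rfl
  · refine Submodule.sub_mem _ (degreeLT_mono hlt (hM m)) (Submodule.smul_mem _ _ ?_)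
    exact mem_degreeLT.2 ((degree_X_pow_le m).trans_lt (by exact_mod_cast hlt))
  · rw [mem_degreeLT, degree_lt_iff_coeff_zero]
    intro k hk
    rcases hk.lt_or_eq with hk | rfl
    · have hMk := (degree_lt_iff_coeff_zero _ _).1 (mem_degreeLT.1 (hM m)) k hk
      simp [hMk, coeff_X_pow, hk.ne']
    · simp

theorem Module.End.aeval_prod_X_sub_C_coeff_apply_eq_zero (hM : ∀ m, M (X ^ m) ∈ R[X]_(m + 1))
    (n : ℕ) {p : R[X]} (hp : p ∈ R[X]_n) :
    aeval M (∏ i ∈ Finset.range n, (X - C ((M (X ^ i)).coeff i))) p = 0 := by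
  induction n generalizing p with
  | zero => simpa [mem_degreeLT] using hp
  | succ n ih =>
    rw [Finset.prod_range_succ, map_mul, Module.End.mul_apply]
    refine ih ?_
    simpa [Module.algebraMap_end_apply] using Module.End.sub_coeff_smul_mem_degreeLT M hM hp

end Triangular

section PowerDifferences

variable {R : Type*} [CommRing R] (s p e r : R[X])

noncomputable def powDiffPoly : ℕ → R[X]
  | 0 => 0
  | 1 => e
  | n + 2 => s * powDiffPoly (n + 1) - p * powDiffPoly n + X ^ n * r

theorem eval_powDiffPoly {u v w A C : R} (hs : u + w = s.eval v) (hp : u * w = p.eval v)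
    (he : A * (u - v) + C * (w - v) = e.eval v)
    (hr : (A + C) * (u - v) * (v - w) = r.eval v) :
    ∀ n, A * (u ^ n - v ^ n) + C * (w ^ n - v ^ n) = (powDiffPoly s p e r n).eval v
  | 0 => by simp [powDiffPoly]
  | 1 => by simpa [powDiffPoly] using he
  | n + 2 => by
    have h₀ := eval_powDiffPoly hs hp he hr n
    have h₁ := eval_powDiffPoly hs hp he hr (n + 1)
    simp only [powDiffPoly, eval_add, eval_sub, eval_mul, eval_pow, eval_X]
    -- `u, w` are roots of `Y ^ 2 - (u + w) Y + u w`, and `v ^ 2 - (u + w) v + u w = (v - u) (v - w)`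
    linear_combination (u + w) * h₁ - u * w * h₀ + v ^ n * hr
      + (powDiffPoly s p e r (n + 1)).eval v * hs - (powDiffPoly s p e r n).eval v * hp

theorem natDegree_powDiffPoly_le (hs : s.natDegree ≤ 1) (hp : p.natDegree ≤ 2)
    (he : e.natDegree ≤ 1) (hr : r.natDegree ≤ 2) :
    ∀ n, (powDiffPoly s p e r n).natDegree ≤ n
  | 0 => by simp [powDiffPoly]
  | 1 => he
  | n + 2 => by
    have h₀ := natDegree_powDiffPoly_le hs hp he hr n
    have h₁ := natDegree_powDiffPoly_le hs hp he hr (n + 1)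
    refine natDegree_add_le_of_degree_le ((natDegree_sub_le_of_le
      (natDegree_mul_le_of_le hs h₁) (natDegree_mul_le_of_le hp h₀)).trans ?_)
      ((natDegree_mul_le_of_le (natDegree_X_pow_le n) hr).trans ?_) <;> omega

end PowerDifferences

section Intertwining

variable {L : (ℂ → ℂ) → ℂ → ℂ} {V : Set ℂ} {χ : ℂ → ℂ} {M : Module.End ℂ ℂ[X]}

theorem iterate_comp_eval_eq
    (hL : ∀ r₁ r₂ : ℂ → ℂ, (∀ s ∈ V, r₁ s = r₂ s) → ∀ t ∈ V, L r₁ t = L r₂ t)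
    (hM : ∀ φ, ∀ t ∈ V, L (fun s => (φ.eval (χ s))) t = (M φ).eval (χ t)) (φ : ℂ[X]) :
    ∀ i, ∀ t ∈ V, L^[i] (fun s => φ.eval (χ s)) t = ((M ^ i) φ).eval (χ t)
  | 0, _, _ => rfl
  | i + 1, t, ht => by
    rw [Function.iterate_succ_apply', pow_succ', Module.End.mul_apply,
      hL _ _ (iterate_comp_eval_eq hL hM φ i) t ht, hM _ t ht]

theorem polyLop_comp_eval_eq
    (hL : ∀ r₁ r₂ : ℂ → ℂ, (∀ s ∈ V, r₁ s = r₂ s) → ∀ t ∈ V, L r₁ t = L r₂ t)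
    (hM : ∀ φ, ∀ t ∈ V, L (fun s => (φ.eval (χ s))) t = (M φ).eval (χ t)) (f φ : ℂ[X])
    {t : ℂ} (ht : t ∈ V) :
    polyLop L f (fun s => φ.eval (χ s)) t = (aeval M f φ).eval (χ t) := by
  simp only [polyLop, aeval_eq_sum_range, LinearMap.coe_sum, Finset.sum_apply, eval_finsetSum,
    LinearMap.smul_apply, eval_smul, smul_eq_mul, iterate_comp_eval_eq hL hM φ _ t ht]

end Intertwining

namespace AW

def regularSet (q P : ℂ) : Set ℂ := {t | t ≠ 0 ∧ ∀ i : ℤ, 1 - P * t ^ 2 * q ^ i ≠ 0}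

section Regular

variable {q P t : ℂ}

theorem mul_mem_regularSet (hq : q ≠ 0) (ht : t ∈ regularSet q P) : q * t ∈ regularSet q P := by
  refine ⟨mul_ne_zero hq ht.1, fun i => ?_⟩
  convert ht.2 (i + 2) using 2
  rw [zpow_add₀ hq, zpow_two]
  ring

theorem div_mem_regularSet (hq : q ≠ 0) (ht : t ∈ regularSet q P) : t / q ∈ regularSet q P := by
  refine ⟨div_ne_zero ht.1 hq, fun i => ?_⟩
  convert ht.2 (i - 2) using 2
  rw [zpow_sub₀ hq]
  field_simp

theorem pow_sub_ne_zero_of_mem_regularSet (hq : q ≠ 0) (ht : t ∈ regularSet q P) (j : ℕ) :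
    q ^ j - t ^ 2 * P ≠ 0 := by
  have h := ht.2 (-j)
  rw [zpow_neg, zpow_natCast] at h
  contrapose! h
  field_simp
  linear_combination h

end Regular

theorem Lop_congr {q a b c d P : ℂ} (hq : q ≠ 0) (r₁ r₂ : ℂ → ℂ)
    (h : ∀ s ∈ regularSet q P, r₁ s = r₂ s) :
    ∀ t ∈ regularSet q P, Lop q a b c d r₁ t = Lop q a b c d r₂ t := fun t ht => by
  simp only [Lop, h t ht, h _ (mul_mem_regularSet hq ht), h _ (div_mem_regularSet hq ht)]

noncomputable def lamSumPoly (q P : ℂ) : ℂ[X] :=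
  C (q + q⁻¹) * X + C ((q + q⁻¹ - 2) * (1 + P / q))

noncomputable def lamProdPoly (q P : ℂ) : ℂ[X] :=
  X ^ 2 - C ((q + q⁻¹ - 2) * (1 + P / q)) * X
    + C ((q - q⁻¹) ^ 2 * (P / q) - (q + q⁻¹ - 2) * (1 + P / q) ^ 2)

noncomputable def lamDiffPoly (q a b c d : ℂ) : ℂ[X] :=
  C ((1 - q) * (a ^ 2 - q ^ 3) / (q ^ 2 * a)) * X
    + C ((1 - q) * (a ^ 2 * (a * b * c * d) + q * a ^ 2 - q * a ^ 2 * (b * c + b * d + c * d)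
        + q ^ 2 * (a * b * c * d) - q ^ 2 * a ^ 2 + q ^ 3 * a * (b + c + d)
        - q ^ 3 * (a * b * c * d) - q ^ 4) / (q ^ 3 * a))

noncomputable def lamDiffProdPoly (q a b c d : ℂ) : ℂ[X] :=
  C ((1 - q) ^ 2 * (a ^ 2 + q ^ 2) / (q ^ 2 * a)) * X ^ 2
    + C ((1 - q) ^ 2 * (2 * a ^ 2 * (a * b * c * d) - q * (a * b * c * d) + 2 * q * a ^ 2
        - q * a ^ 2 * (b * c + b * d + c * d) - q ^ 2 * a * (b + c + d)
        + 2 * q ^ 2 * (a * b * c * d) - q ^ 2 * a ^ 2 + 2 * q ^ 3) / (q ^ 3 * a)) * X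
    + C ((1 - q) ^ 2 * (-a ^ 2 * (a * b * c * d) + a ^ 2 * (a * b * c * d) ^ 2
        + q * a * (a * b * c * d) * (b + c + d) - q * (a * b * c * d) ^ 2
        + q * a ^ 2 * (a * b * c * d) - q * a ^ 2 * (a * b * c * d) * (b * c + b * d + c * d)
        - q ^ 2 * (a * b * c * d) + q ^ 2 * a ^ 2 + q ^ 2 * (a * b * c * d) ^ 2
        - q ^ 2 * a ^ 2 * (a * b * c * d) - q ^ 3 * a * (b + c + d) + q ^ 3 * (a * b * c * d)
        - q ^ 3 * a ^ 2 + q ^ 3 * a ^ 2 * (b * c + b * d + c * d) + q ^ 4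
        - q ^ 4 * (a * b * c * d)) / (q ^ 4 * a))

section Identities

variable {q a b c d t : ℂ}

theorem lamt_mul_add_lamt_div (hq : q ≠ 0) (ht : t ≠ 0) :
    lamt q a b c d (q * t) + lamt q a b c d (t / q)
      = (lamSumPoly q (a * b * c * d)).eval (lamt q a b c d t) := by
  simp only [lamt, lamSumPoly, eval_add, eval_mul, eval_C, eval_X]
  field_simp
  ring

theorem lamt_mul_mul_lamt_div (hq : q ≠ 0) (ht : t ≠ 0) :
    lamt q a b c d (q * t) * lamt q a b c d (t / q)
      = (lamProdPoly q (a * b * c * d)).eval (lamt q a b c d t) := by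
  simp only [lamt, lamProdPoly, eval_add, eval_sub, eval_mul, eval_pow, eval_C, eval_X]
  field_simp
  ring

theorem Acoef_Ccoef_lamt_sub (hq : q ≠ 0) (ha : a ≠ 0) (ht : t ∈ regularSet q (a * b * c * d)) :
    Acoef q a b c d t * (lamt q a b c d (q * t) - lamt q a b c d t)
      + Ccoef q a b c d t * (lamt q a b c d (t / q) - lamt q a b c d t)
      = (lamDiffPoly q a b c d).eval (lamt q a b c d t) := by
  simp only [Acoef, Ccoef, lamt, lamDiffPoly, eval_add, eval_mul, eval_C, eval_X]
  -- naming `abcd` lets `field_simp` recognise the denominators `q ^ j - t ^ 2 * P`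
  set P := a * b * c * d with hP
  have h₀ : 1 - t ^ 2 * P ≠ 0 := pow_zero q ▸ pow_sub_ne_zero_of_mem_regularSet hq ht 0
  have h₁ : q - t ^ 2 * P ≠ 0 := pow_one q ▸ pow_sub_ne_zero_of_mem_regularSet hq ht 1
  have h₂ := pow_sub_ne_zero_of_mem_regularSet hq ht 2
  have ht₀ : t ≠ 0 := ht.1
  field_simp
  rw [hP]
  ring

theorem Acoef_add_Ccoef_lamt_sub (hq : q ≠ 0) (ha : a ≠ 0)
    (ht : t ∈ regularSet q (a * b * c * d)) :
    (Acoef q a b c d t + Ccoef q a b c d t) * (lamt q a b c d (q * t) - lamt q a b c d t)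
        * (lamt q a b c d t - lamt q a b c d (t / q))
      = (lamDiffProdPoly q a b c d).eval (lamt q a b c d t) := by
  simp only [Acoef, Ccoef, lamt, lamDiffProdPoly, eval_add, eval_mul, eval_pow, eval_C, eval_X]
  -- naming `abcd` lets `field_simp` recognise the denominators `q ^ j - t ^ 2 * P`
  set P := a * b * c * d with hP
  have h₀ : 1 - t ^ 2 * P ≠ 0 := pow_zero q ▸ pow_sub_ne_zero_of_mem_regularSet hq ht 0
  have h₁ : q - t ^ 2 * P ≠ 0 := pow_one q ▸ pow_sub_ne_zero_of_mem_regularSet hq ht 1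
  have h₂ := pow_sub_ne_zero_of_mem_regularSet hq ht 2
  have ht₀ : t ≠ 0 := ht.1
  field_simp
  rw [hP]
  ring

end Identities

noncomputable def lamPowPoly (q a b c d : ℂ) : ℕ → ℂ[X] :=
  powDiffPoly (lamSumPoly q (a * b * c * d)) (lamProdPoly q (a * b * c * d))
    (lamDiffPoly q a b c d) (lamDiffProdPoly q a b c d)

noncomputable def lamOp (q a b c d : ℂ) : Module.End ℂ ℂ[X] :=
  (a / q + q / a) • LinearMap.id +
    lsum fun m => LinearMap.toSpanSingleton ℂ ℂ[X] (lamPowPoly q a b c d m)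

section Operator

variable {q a b c d : ℂ}

theorem natDegree_lamPowPoly_le (m : ℕ) : (lamPowPoly q a b c d m).natDegree ≤ m :=
  natDegree_powDiffPoly_le _ _ _ _ natDegree_linear_le (by unfold lamProdPoly; compute_degree)
    natDegree_linear_le natDegree_quadratic_le m

theorem lamOp_X_pow (m : ℕ) :
    lamOp q a b c d (X ^ m) = (a / q + q / a) • X ^ m + lamPowPoly q a b c d m := by
  rw [lamOp, LinearMap.add_apply, LinearMap.smul_apply, LinearMap.id_apply, lsum_apply,
    X_pow_eq_monomial, sum_monomial_index _ _ (zero_smul ℂ _), LinearMap.toSpanSingleton_apply,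
    one_smul]

theorem lamOp_X_pow_mem_degreeLT (m : ℕ) : lamOp q a b c d (X ^ m) ∈ ℂ[X]_(m + 1) := by
  rw [lamOp_X_pow, degreeLT_succ_eq_degreeLE]
  exact Submodule.add_mem _ (Submodule.smul_mem _ _ (mem_degreeLE.2 (degree_X_pow_le m)))
    (mem_degreeLE.2 (degree_le_of_natDegree_le (natDegree_lamPowPoly_le m)))

theorem Lop_lamt_eq_eval_lamOp (hq : q ≠ 0) (ha : a ≠ 0) (φ : ℂ[X]) {t : ℂ}
    (ht : t ∈ regularSet q (a * b * c * d)) :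
    Lop q a b c d (fun s => φ.eval (lamt q a b c d s)) t
      = (lamOp q a b c d φ).eval (lamt q a b c d t) := by
  have hpow : ∀ m, _ = (lamPowPoly q a b c d m).eval _ :=
    eval_powDiffPoly _ _ _ _ (lamt_mul_add_lamt_div hq ht.1)
    (lamt_mul_mul_lamt_div hq ht.1) (Acoef_Ccoef_lamt_sub hq ha ht)
    (Acoef_add_Ccoef_lamt_sub hq ha ht)
  simp only [Lop, Bcoef, lamOp, LinearMap.add_apply, LinearMap.smul_apply, LinearMap.id_apply,
    lsum_apply, LinearMap.toSpanSingleton_apply, eval_add, eval_smul, smul_eq_mul, sum_def,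
    eval_finsetSum, eval_eq_sum (p := φ), Finset.mul_sum, ← Finset.sum_add_distrib]
  refine Finset.sum_congr rfl fun m _ => ?_
  linear_combination φ.coeff m * hpow m

end Operator

section Annihilator

variable {q a b c d : ℂ}

theorem polyLop_Lop_lamt_eq_zero (hq : q ≠ 0) (ha : a ≠ 0) {n : ℕ} {g : ℂ[X]}
    (hg : (∏ i ∈ Finset.range n, (X - C ((lamOp q a b c d (X ^ i)).coeff i))) ∣ g)
    {φ : ℂ[X]} (hφ : φ ∈ ℂ[X]_n) {t : ℂ} (ht : t ∈ regularSet q (a * b * c * d)) :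
    polyLop (Lop q a b c d) g (fun s => φ.eval (lamt q a b c d s)) t = 0 := by
  obtain ⟨h, rfl⟩ := hg
  rw [polyLop_comp_eval_eq (Lop_congr hq) (fun φ _ ht => Lop_lamt_eq_eval_lamOp hq ha φ ht) _ _ ht,
    mul_comm, map_mul, Module.End.mul_apply,
    Module.End.aeval_prod_X_sub_C_coeff_apply_eq_zero _ lamOp_X_pow_mem_degreeLT n hφ, map_zero,
    eval_zero]

theorem exists_LopD_eq_Lop (ha : a ≠ 0) (hb : b ≠ 0) (hc : c ≠ 0) (hd : d ≠ 0) (δ : Fin 4) :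
    ∃ a' b' c' d', a' ≠ 0 ∧ a' * b' * c' * d' = a * b * c * d ∧
      LopD q a b c d δ = Lop q a' b' c' d' := by
  fin_cases δ
  exacts [⟨a, b, c, d, ha, rfl, rfl⟩, ⟨b, c, d, a, hb, by ring, rfl⟩,
    ⟨c, d, a, b, hc, by ring, rfl⟩, ⟨d, a, b, c, hd, by ring, rfl⟩]

theorem exists_monic_annihilator_LopD (hq : q ≠ 0) (ha : a ≠ 0) (hb : b ≠ 0) (hc : c ≠ 0)
    (hd : d ≠ 0) (n : ℕ) (δ : Fin 4) :
    ∃ F : ℂ[X], F.Monic ∧ ∀ g, F ∣ g → ∀ φ : ℂ[X], φ.natDegree ≤ n →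
      ∀ t ∈ regularSet q (a * b * c * d),
        polyLop (LopD q a b c d δ) g (fun s => φ.eval (lamt q a b c d s)) t = 0 := by
  obtain ⟨a', b', c', d', ha', hP, hL⟩ := exists_LopD_eq_Lop (q := q) ha hb hc hd δ
  have hlam : lamt q a b c d = lamt q a' b' c' d' := by
    funext s
    simp only [lamt, hP]
  refine ⟨∏ i ∈ Finset.range (n + 1), (X - C ((lamOp q a' b' c' d' (X ^ i)).coeff i)),
    monic_prod_of_monic _ _ fun i _ => monic_X_sub_C _, fun g hg φ hφ t ht => ?_⟩
  rw [hL, hlam]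
  refine polyLop_Lop_lamt_eq_zero hq ha' hg ?_ (hP ▸ ht)
  rw [degreeLT_succ_eq_degreeLE, mem_degreeLE]
  exact degree_le_of_natDegree_le hφ

end Annihilator

end AW

theorem annihilating_polynomial_exists_general
    (q : ℝ) (hq0 : 0 < q)
    (a b c d : ℂ) (ha : a ≠ 0) (hb : b ≠ 0) (hc : c ≠ 0) (hd : d ≠ 0)
    (k : ℕ)
    (φ : Fin k → Polynomial ℂ)
    (δ : Fin k → Fin 4) :
    ∃ f : Polynomial ℂ, f ≠ 0 ∧
      (∀ j : Fin k, ∀ t : ℂ, t ≠ 0 →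
        (∀ i : ℤ, 1 - a * b * c * d * t ^ 2 * (q : ℂ) ^ i ≠ 0) →
        polyLop (LopD (q : ℂ) a b c d (δ j)) f
          (fun s => Polynomial.eval (lamt (q : ℂ) a b c d s) (φ j)) t = 0) ∧
      ∀ N : ℕ, f.natDegree ≤ N → ∃ g : Polynomial ℂ, g ≠ 0 ∧ g.natDegree = N ∧
        ∀ j : Fin k, ∀ t : ℂ, t ≠ 0 →
          (∀ i : ℤ, 1 - a * b * c * d * t ^ 2 * (q : ℂ) ^ i ≠ 0) →
          polyLop (LopD (q : ℂ) a b c d (δ j)) g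
            (fun s => Polynomial.eval (lamt (q : ℂ) a b c d s) (φ j)) t = 0 := by
  have hq : (q : ℂ) ≠ 0 := Complex.ofReal_ne_zero.2 hq0.ne'
  choose F hF hann using
    exists_monic_annihilator_LopD hq ha hb hc hd (Finset.univ.sup fun j => (φ j).natDegree)
  set f := ∏ ε, F ε
  have hf : f.Monic := monic_prod_of_monic _ _ fun ε _ => hF ε
  have hannihilates : ∀ g, f ∣ g → ∀ j, ∀ t ∈ AW.regularSet q (a * b * c * d),
      polyLop (LopD q a b c d (δ j)) g (fun s => (φ j).eval (lamt q a b c d s)) t = 0 :=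
    fun g hg j => hann (δ j) g ((Finset.dvd_prod_of_mem F (Finset.mem_univ _)).trans hg) (φ j)
      (Finset.le_sup (f := fun j => (φ j).natDegree) (Finset.mem_univ j))
  refine ⟨f, hf.ne_zero, fun j t ht hreg => hannihilates f dvd_rfl j t ⟨ht, hreg⟩, fun N hN => ?_⟩
  refine ⟨X ^ (N - f.natDegree) * f, ((monic_X_pow _).mul hf).ne_zero, ?_,
    fun j t ht hreg => hannihilates _ (dvd_mul_left _ _) j t ⟨ht, hreg⟩⟩
  rw [(monic_X_pow _).natDegree_mul hf, natDegree_X_pow]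
  omega

theorem annihilating_polynomial_exists
    (q : ℝ) (hq0 : 0 < q) (hq1 : q < 1)
    (a b c d : ℂ) (ha : a ≠ 0) (hb : b ≠ 0) (hc : c ≠ 0) (hd : d ≠ 0)
    (k : ℕ) (hk : 1 ≤ k)
    (φ : Fin k → Polynomial ℂ) (hφ : ∀ j, φ j ≠ 0)
    (δ : Fin k → Fin 4) :
    ∃ f : Polynomial ℂ, f ≠ 0 ∧
      (∀ j : Fin k, ∀ t : ℂ, t ≠ 0 →
        (∀ i : ℤ, 1 - a * b * c * d * t ^ 2 * (q : ℂ) ^ i ≠ 0) →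
        polyLop (LopD (q : ℂ) a b c d (δ j)) f
          (fun s => Polynomial.eval (lamt (q : ℂ) a b c d s) (φ j)) t = 0) ∧
      ∀ N : ℕ, f.natDegree ≤ N → ∃ g : Polynomial ℂ, g ≠ 0 ∧ g.natDegree = N ∧
        ∀ j : Fin k, ∀ t : ℂ, t ≠ 0 →
          (∀ i : ℤ, 1 - a * b * c * d * t ^ 2 * (q : ℂ) ^ i ≠ 0) →
          polyLop (LopD (q : ℂ) a b c d (δ j)) g
            (fun s => Polynomial.eval (lamt (q : ℂ) a b c d s) (φ j)) t = 0 :=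
  annihilating_polynomial_exists_general q hq0 a b c d ha hb hc hd k φ δ
end

section
/- Let K ≥ 1 and N ≥ 0 be integers. Let Q = Σ_{l=0}^{K} Q^{(−l)}(n) E^{−l} be a difference operator acting on functions f: ℤ → ℂ by (Qf)(n) = Σ_{l=0}^{K} Q^{(−l)}(n) f(n−l), with Q^{(0)}(n) ≠ 0 and Q^{(−K)}(n) ≠ 0 for all n ∈ ℤ. Let M = Σ_{i=−N}^{N} M^{(i)}(n) E^{i} be any difference operator (acting by (Mf)(n) = Σ_{i=−N}^{N} M^{(i)}(n) f(n+i)) such that Mf lies in the kernel of Q whenever f does, i.e. M(ker Q) ⊆ ker Q. Then there exist functions L̂^{(i)}: ℤ → ℂ, −N ≤ i ≤ N, such that Σ_{i=−N}^{N} L̂^{(i)}(n)·(Qf)(n+i) = (Q(Mf))(n) for every f: ℤ → ℂ and every n ∈ ℤ; that is, there is a difference operator L̂ with the same support as M satisfying L̂Q = QM. (The intertwining step (4.7) used to produce the difference operators L̂^f_n.) -/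
open Finset

/-! For fixed `n`, the maps `f ↦ (Q (M f))(n)` and `f ↦ (Q f)(n + i)`, `|i| ≤ N`, are linear forms
on `ℤ → 𝕜`, so by duality it suffices that `(Q (M f))(n) = 0` whenever `(Q f)(n + i) = 0` for all
`|i| ≤ N`. Since `Q₀` and `Q_K` never vanish, the recurrence `Q g = 0` can be solved forwards and
backwards from any `K` consecutive initial values; take the solution `g` agreeing with `f` on
`[n - N - K, n - N)`. The forward recurrence propagates this agreement up to `n + N`, and
`(Q (M f))(n)` only sees `f` on `[n - N - K, n + N]`, so `(Q (M f))(n) = (Q (M g))(n) = 0`. -/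

variable {𝕜 : Type*} [Field 𝕜]

def backwardDiffOp (K : ℕ) (Q : ℕ → ℤ → 𝕜) : (ℤ → 𝕜) →ₗ[𝕜] (ℤ → 𝕜) where
  toFun f n := ∑ l ∈ range (K + 1), Q l n * f (n - l)
  map_add' f g := by ext n; simp [mul_add, sum_add_distrib]
  map_smul' c f := by ext n; simp [mul_sum, mul_left_comm]

theorem backwardDiffOp_apply (K : ℕ) (Q : ℕ → ℤ → 𝕜) (f : ℤ → 𝕜) (n : ℤ) :
    backwardDiffOp K Q f n = ∑ l ∈ range (K + 1), Q l n * f (n - l) :=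
  rfl

noncomputable def bandDiffOp (N : ℕ) (M : ℤ → ℤ → 𝕜) : (ℤ → 𝕜) →ₗ[𝕜] (ℤ → 𝕜) where
  toFun f n := ∑ i ∈ Icc (-(N : ℤ)) N, M i n * f (n + i)
  map_add' f g := by ext n; simp [mul_add, sum_add_distrib]
  map_smul' c f := by ext n; simp [mul_sum, mul_left_comm]

theorem bandDiffOp_apply (N : ℕ) (M : ℤ → ℤ → 𝕜) (f : ℤ → 𝕜) (n : ℤ) :
    bandDiffOp N M f n = ∑ i ∈ Icc (-(N : ℤ)) N, M i n * f (n + i) :=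
  rfl

section backward

variable (K : ℕ) (Q : ℕ → ℤ → 𝕜)

theorem backwardDiffOp_apply_eq_mul_add (f : ℤ → 𝕜) (n : ℤ) :
    backwardDiffOp K Q f n = Q 0 n * f n + ∑ l ∈ range K, Q (l + 1) n * f (n - (l + 1)) := by
  rw [backwardDiffOp_apply, sum_range_succ', add_comm]
  push_cast
  simp

theorem backwardDiffOp_apply_eq_add_mul (f : ℤ → 𝕜) (n : ℤ) :
    backwardDiffOp K Q f n = ∑ l ∈ range K, Q l n * f (n - l) + Q K n * f (n - K) := by
  rw [backwardDiffOp_apply, sum_range_succ]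

theorem eqOn_Icc_of_backwardDiffOp_eq (hQ0 : ∀ n, Q 0 n ≠ 0) {f g : ℤ → 𝕜} {a b : ℤ}
    (hinit : Set.EqOn f g (Set.Ico a (a + K)))
    (hQ : ∀ m ∈ Set.Icc (a + K) b, backwardDiffOp K Q f m = backwardDiffOp K Q g m) :
    Set.EqOn f g (Set.Icc a b) := by
  rintro m ⟨ham, hmb⟩
  induction hk : (m - a).toNat using Nat.strong_induction_on generalizing m with
  | _ k ih =>
  by_cases hmK : m < a + K
  · exact hinit ⟨ham, hmK⟩
  have hprev : ∀ l ∈ range K, f (m - (l + 1)) = g (m - (l + 1)) := fun l hl => by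
    rw [mem_range] at hl
    exact ih (m - (l + 1) - a).toNat (by omega) (by omega) (by omega) rfl
  have hm' := hQ m ⟨by omega, hmb⟩
  rw [backwardDiffOp_apply_eq_mul_add, backwardDiffOp_apply_eq_mul_add,
    sum_congr rfl fun l hl => by rw [hprev l hl]] at hm'
  exact mul_left_cancel₀ (hQ0 m) (add_right_cancel hm')

/-- The solution of `Q g = 0` equal to `v` on `[a, a + K)`, solved for the trailing coefficient
below `a` and for the leading one from `a + K` on. -/
noncomputable def kerExtension (a : ℤ) (v : ℤ → 𝕜) : ℤ → 𝕜
  | m =>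
    if m < a then
      -(∑ l ∈ (range K).attach, Q l (m + K) * kerExtension a v (m + K - l)) / Q K (m + K)
    else if m < a + K then v m
    else -(∑ l ∈ (range K).attach, Q (l + 1) m * kerExtension a v (m - (l + 1))) / Q 0 m
termination_by m => (if m < a then a - m else m - (a + K) + 1).toNat
decreasing_by
  all_goals
    have hl := mem_range.1 l.2
    split_ifs <;> omega

variable {K Q}

theorem kerExtension_of_lt {a : ℤ} (v : ℤ → 𝕜) {m : ℤ} (hm : m < a) :
    kerExtension K Q a v m =
      -(∑ l ∈ range K, Q l (m + K) * kerExtension K Q a v (m + K - l)) / Q K (m + K) := by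
  rw [kerExtension, if_pos hm,
    sum_attach (range K) fun l : ℕ => Q l (m + K) * kerExtension K Q a v (m + K - l)]

theorem kerExtension_of_mem_Ico {a : ℤ} (v : ℤ → 𝕜) {m : ℤ} (hm : m ∈ Set.Ico a (a + K)) :
    kerExtension K Q a v m = v m := by
  rw [kerExtension, if_neg hm.1.not_gt, if_pos hm.2]

theorem kerExtension_of_le {a : ℤ} (v : ℤ → 𝕜) {m : ℤ} (hm : a + K ≤ m) :
    kerExtension K Q a v m =
      -(∑ l ∈ range K, Q (l + 1) m * kerExtension K Q a v (m - (l + 1))) / Q 0 m := by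
  rw [kerExtension, if_neg (by omega), if_neg (by omega),
    sum_attach (range K) fun l : ℕ => Q (l + 1) m * kerExtension K Q a v (m - (l + 1))]

theorem backwardDiffOp_kerExtension (hQ0 : ∀ n, Q 0 n ≠ 0) (hQK : ∀ n, Q K n ≠ 0)
    (a : ℤ) (v : ℤ → 𝕜) : backwardDiffOp K Q (kerExtension K Q a v) = 0 := by
  ext m
  by_cases hm : a + K ≤ m
  · rw [backwardDiffOp_apply_eq_mul_add, kerExtension_of_le v hm, mul_div_cancel₀ _ (hQ0 m)]
    simp
  · rw [backwardDiffOp_apply_eq_add_mul, kerExtension_of_lt v (by omega), sub_add_cancel,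
      mul_div_cancel₀ _ (hQK m)]
    simp

end backward

variable {K N : ℕ} {Q : ℕ → ℤ → 𝕜} {M : ℤ → ℤ → 𝕜}

theorem backwardDiffOp_bandDiffOp_congr {f g : ℤ → 𝕜} {n : ℤ}
    (h : Set.EqOn f g (Set.Icc (n - N - K) (n + N))) :
    backwardDiffOp K Q (bandDiffOp N M f) n = backwardDiffOp K Q (bandDiffOp N M g) n := by
  simp only [backwardDiffOp_apply, bandDiffOp_apply]
  refine sum_congr rfl fun l hl => congrArg (Q l n * ·) (sum_congr rfl fun i hi => ?_)
  rw [mem_range] at hl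
  rw [mem_Icc] at hi
  rw [h ⟨by omega, by omega⟩]

theorem backwardDiffOp_bandDiffOp_eq_zero (hQ0 : ∀ n, Q 0 n ≠ 0) (hQK : ∀ n, Q K n ≠ 0)
    (hker : LinearMap.ker (backwardDiffOp K Q) ≤
      LinearMap.ker (backwardDiffOp K Q ∘ₗ bandDiffOp N M))
    {f : ℤ → 𝕜} {n : ℤ} (hf : ∀ i ∈ Icc (-(N : ℤ)) N, backwardDiffOp K Q f (n + i) = 0) :
    backwardDiffOp K Q (bandDiffOp N M f) n = 0 := by
  set g := kerExtension K Q (n - N - K) f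
  have hg : backwardDiffOp K Q g = 0 := backwardDiffOp_kerExtension hQ0 hQK _ f
  have hfg : Set.EqOn f g (Set.Icc (n - N - K) (n + N)) := by
    refine eqOn_Icc_of_backwardDiffOp_eq K Q hQ0 (fun m hm => (kerExtension_of_mem_Ico f hm).symm)
      fun m hm => ?_
    rw [hg, Pi.zero_apply, ← add_sub_cancel n m]
    exact hf _ (by rw [mem_Icc]; constructor <;> linarith [hm.1, hm.2])
  rw [backwardDiffOp_bandDiffOp_congr hfg]
  exact congrFun (LinearMap.mem_ker.1 (hker (LinearMap.mem_ker.2 hg))) n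

theorem exists_sum_mul_backwardDiffOp_eq (hQ0 : ∀ n, Q 0 n ≠ 0) (hQK : ∀ n, Q K n ≠ 0)
    (hker : LinearMap.ker (backwardDiffOp K Q) ≤
      LinearMap.ker (backwardDiffOp K Q ∘ₗ bandDiffOp N M)) (n : ℤ) :
    ∃ c : ℤ → 𝕜, ∀ f : ℤ → 𝕜, ∑ i ∈ Icc (-(N : ℤ)) N, c i * backwardDiffOp K Q f (n + i) =
      backwardDiffOp K Q (bandDiffOp N M f) n := by
  let ψ (i : Icc (-(N : ℤ)) N) : (ℤ → 𝕜) →ₗ[𝕜] 𝕜 := LinearMap.proj (n + i) ∘ₗ backwardDiffOp K Q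
  have hspan : LinearMap.proj n ∘ₗ backwardDiffOp K Q ∘ₗ bandDiffOp N M ∈
      Submodule.span 𝕜 (Set.range ψ) := by
    refine mem_span_of_iInf_ker_le_ker fun f hf => ?_
    simp only [Submodule.mem_iInf, LinearMap.mem_ker] at hf
    exact backwardDiffOp_bandDiffOp_eq_zero hQ0 hQK hker fun i hi => hf ⟨i, hi⟩
  obtain ⟨c, hc⟩ := (Submodule.mem_span_range_iff_exists_fun 𝕜).1 hspan
  refine ⟨fun i => if h : i ∈ Icc (-(N : ℤ)) N then c ⟨i, h⟩ else 0, fun f => ?_⟩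
  rw [← sum_coe_sort]
  simpa [ψ] using LinearMap.congr_fun hc f

theorem intertwining_difference_operator_general
    (K : ℕ) (N : ℕ)
    (Qc : ℕ → ℤ → ℂ) (hQ0 : ∀ n : ℤ, Qc 0 n ≠ 0) (hQK : ∀ n : ℤ, Qc K n ≠ 0)
    (Mc : ℤ → ℤ → ℂ)
    (hker : ∀ f : ℤ → ℂ,
      (∀ n : ℤ, ∑ l ∈ Finset.range (K + 1), Qc l n * f (n - l) = 0) →
      ∀ n : ℤ, ∑ l ∈ Finset.range (K + 1), Qc l n *
        (∑ i ∈ Finset.Icc (-(N : ℤ)) (N : ℤ), Mc i (n - l) * f (n - l + i)) = 0) :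
    ∃ Lc : ℤ → ℤ → ℂ, ∀ (f : ℤ → ℂ) (n : ℤ),
      ∑ i ∈ Finset.Icc (-(N : ℤ)) (N : ℤ), Lc i n *
          (∑ l ∈ Finset.range (K + 1), Qc l (n + i) * f (n + i - l)) =
        ∑ l ∈ Finset.range (K + 1), Qc l n *
          (∑ i ∈ Finset.Icc (-(N : ℤ)) (N : ℤ), Mc i (n - l) * f (n - l + i)) := by
  have hker' : LinearMap.ker (backwardDiffOp K Qc) ≤
      LinearMap.ker (backwardDiffOp K Qc ∘ₗ bandDiffOp N Mc) := fun f hf =>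
    LinearMap.mem_ker.2 (funext (hker f (congrFun (LinearMap.mem_ker.1 hf))))
  choose c hc using exists_sum_mul_backwardDiffOp_eq hQ0 hQK hker'
  exact ⟨fun i n => c n i, fun f n => hc n f⟩

/-- The intertwining step (4.7): if a difference operator `M` preserves the kernel of a
difference operator `Q` with everywhere nonvanishing leading and trailing coefficients, then
there is a difference operator `L̂` with the same support as `M` satisfying `L̂ Q = Q M`. -/
theorem intertwining_difference_operator
    (K : ℕ) (hK : 1 ≤ K) (N : ℕ)
    (Qc : ℕ → ℤ → ℂ) (hQ0 : ∀ n : ℤ, Qc 0 n ≠ 0) (hQK : ∀ n : ℤ, Qc K n ≠ 0)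
    (Mc : ℤ → ℤ → ℂ)
    (hker : ∀ f : ℤ → ℂ,
      (∀ n : ℤ, ∑ l ∈ Finset.range (K + 1), Qc l n * f (n - l) = 0) →
      ∀ n : ℤ, ∑ l ∈ Finset.range (K + 1), Qc l n *
        (∑ i ∈ Finset.Icc (-(N : ℤ)) (N : ℤ), Mc i (n - l) * f (n - l + i)) = 0) :
    ∃ Lc : ℤ → ℤ → ℂ, ∀ (f : ℤ → ℂ) (n : ℤ),
      ∑ i ∈ Finset.Icc (-(N : ℤ)) (N : ℤ), Lc i n *
          (∑ l ∈ Finset.range (K + 1), Qc l (n + i) * f (n + i - l)) =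
        ∑ l ∈ Finset.range (K + 1), Qc l n *
          (∑ i ∈ Finset.Icc (-(N : ℤ)) (N : ℤ), Mc i (n - l) * f (n - l + i)) :=
  intertwining_difference_operator_general K N Qc hQ0 hQK Mc hker
end

section
/- Let j ∈ ℤ. A Laurent polynomial r ∈ ℂ[t, t^{−1}] satisfies I^{(j)}(r) = r if and only if there exists a polynomial h ∈ ℂ[y] such that r = h(λ_{n−j/2}), where λ_{n−j/2} denotes the Laurent polynomial (q^{j/2}/t − 1)(1 − abcd·q^{−j/2−1} t); in particular λ_{n−j/2} itself is invariant under I^{(j)}. -/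
open scoped BigOperators

open AW

/-!
With `κ = q^{j+1}/(abcd)` the involution `I^{(j)}` is `t ↦ κ/t`, and
`λ_{n-j/2} = B (t + κ/t) + C` with `B ≠ 0`, so it suffices to show that the Laurent polynomials
fixed by `t ↦ κ/t` are exactly the polynomials in the Joukowski function `J(t) = t + κ/t`.
Since `t² = J(t) t - κ` and `t⁻¹ = (J(t) - t)/κ`, every Laurent polynomial is `f(J) + t g(J)`;
invariance forces `(κ/t - t) g(J(t)) = 0`, and `J` takes infinitely many values off `t² = κ`,
so `g = 0`.
-/

open Polynomial

section Joukowski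

variable {F : Type*} [Field F] {κ : F}

def joukowski (κ t : F) : F := t + κ / t

theorem joukowski_div (hκ : κ ≠ 0) (t : F) : joukowski κ (κ / t) = joukowski κ t := by
  rw [joukowski, joukowski, div_div_cancel₀ hκ, add_comm]

theorem exists_joukowski_eq [IsAlgClosed F] (hκ : κ ≠ 0) {y : F} (hy : y ^ 2 ≠ 4 * κ) :
    ∃ t ≠ 0, t ^ 2 ≠ κ ∧ joukowski κ t = y := by
  obtain ⟨t, ht⟩ := IsAlgClosed.exists_root (C 1 * X ^ 2 + C (-y) * X + C κ)
    (by rw [degree_quadratic one_ne_zero]; decide)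
  have hroot : t ^ 2 - y * t + κ = 0 := by
    simpa [sub_eq_add_neg] using ht.eq_zero
  have ht0 : t ≠ 0 := by
    rintro rfl
    exact hκ (by simpa using hroot)
  refine ⟨t, ht0, fun htκ => hy ?_, ?_⟩
  · have hy2 : y = 2 * t := mul_right_cancel₀ ht0 (by linear_combination -hroot - htκ)
    rw [hy2]
    linear_combination 4 * htκ
  · rw [joukowski]
    field_simp
    linear_combination hroot

theorem eq_zero_of_eval_joukowski_eq_zero [IsAlgClosed F] (hκ : κ ≠ 0) {g : F[X]}
    (hg : ∀ t ≠ 0, t ^ 2 ≠ κ → g.eval (joukowski κ t) = 0) : g = 0 := by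
  apply eq_zero_of_infinite_isRoot
  refine ((finite_setOfPred_isRoot (X_pow_sub_C_ne_zero two_pos (4 * κ))).infinite_compl).mono ?_
  intro y hy
  obtain ⟨t, ht0, htκ, rfl⟩ := exists_joukowski_eq hκ (y := y) (by simpa [sub_eq_zero] using hy)
  exact hg t ht0 htκ

def IsJoukowskiDecomposable (κ : F) (φ : F → F) : Prop :=
  ∃ f g : F[X], ∀ t ≠ 0, φ t = f.eval (joukowski κ t) + t * g.eval (joukowski κ t)

namespace IsJoukowskiDecomposable

theorem congr {φ ψ : F → F} (hφ : IsJoukowskiDecomposable κ φ) (h : ∀ t ≠ 0, ψ t = φ t) :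
    IsJoukowskiDecomposable κ ψ := by
  obtain ⟨f, g, hfg⟩ := hφ
  exact ⟨f, g, fun t ht => (h t ht).trans (hfg t ht)⟩

theorem one : IsJoukowskiDecomposable κ (fun _ => 1) :=
  ⟨1, 0, fun _ _ => by simp⟩

theorem add {φ ψ : F → F} (hφ : IsJoukowskiDecomposable κ φ)
    (hψ : IsJoukowskiDecomposable κ ψ) : IsJoukowskiDecomposable κ (fun t => φ t + ψ t) := by
  obtain ⟨f₁, g₁, h₁⟩ := hφ
  obtain ⟨f₂, g₂, h₂⟩ := hψ
  refine ⟨f₁ + f₂, g₁ + g₂, fun t ht => ?_⟩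
  simp only [h₁ t ht, h₂ t ht, eval_add]
  ring

theorem const_mul {φ : F → F} (hφ : IsJoukowskiDecomposable κ φ) (c : F) :
    IsJoukowskiDecomposable κ (fun t => c * φ t) := by
  obtain ⟨f, g, hfg⟩ := hφ
  refine ⟨C c * f, C c * g, fun t ht => ?_⟩
  simp only [hfg t ht, eval_mul, eval_C]
  ring

-- `t² = J(t) t - κ`
theorem id_mul {φ : F → F} (hφ : IsJoukowskiDecomposable κ φ) :
    IsJoukowskiDecomposable κ (fun t => t * φ t) := by
  obtain ⟨f, g, hfg⟩ := hφ
  refine ⟨-C κ * g, f + X * g, fun t ht => ?_⟩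
  simp only [hfg t ht, eval_mul, eval_add, eval_neg, eval_C, eval_X, joukowski]
  field_simp
  ring

-- `t⁻¹ = (J(t) - t) / κ`
theorem inv_mul (hκ : κ ≠ 0) {φ : F → F} (hφ : IsJoukowskiDecomposable κ φ) :
    IsJoukowskiDecomposable κ (fun t => t⁻¹ * φ t) := by
  obtain ⟨f, g, hfg⟩ := hφ
  refine ⟨C κ⁻¹ * X * f + g, -C κ⁻¹ * f, fun t ht => ?_⟩
  simp only [hfg t ht, eval_mul, eval_add, eval_neg, eval_C, eval_X, joukowski]
  field_simp
  ring

theorem zpow (hκ : κ ≠ 0) (m : ℤ) : IsJoukowskiDecomposable κ (fun t => t ^ m) := by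
  induction m using Int.induction_on with
  | zero => exact one.congr fun t _ => zpow_zero t
  | succ m ih => exact ih.id_mul.congr fun t ht => by rw [zpow_add_one₀ ht, mul_comm]
  | pred m ih => exact (ih.inv_mul hκ).congr fun t ht => by rw [zpow_sub_one₀ ht, mul_comm]

theorem laurent (hκ : κ ≠ 0) (p : F[X]) (M : ℕ) :
    IsJoukowskiDecomposable κ (fun t => p.eval t / t ^ M) := by
  induction p using Polynomial.induction_on' with
  | add p₁ p₂ h₁ h₂ => exact (h₁.add h₂).congr fun t _ => by rw [eval_add, add_div]
  | monomial n c =>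
    refine ((zpow hκ ((n : ℤ) - M)).const_mul c).congr fun t ht => ?_
    rw [eval_monomial, zpow_sub₀ ht, zpow_natCast, zpow_natCast, mul_div_assoc]

end IsJoukowskiDecomposable

theorem invariant_iff_exists_eval_joukowski [IsAlgClosed F] (hκ : κ ≠ 0) {φ : F → F}
    (hφ : IsJoukowskiDecomposable κ φ) :
    (∀ t ≠ 0, φ (κ / t) = φ t) ↔ ∃ h : F[X], ∀ t ≠ 0, φ t = h.eval (joukowski κ t) := by
  constructor
  · intro hinv
    obtain ⟨f, g, hfg⟩ := hφ
    suffices g = 0 from ⟨f, fun t ht => by simp [hfg t ht, this]⟩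
    refine eq_zero_of_eval_joukowski_eq_zero hκ fun t ht htκ => ?_
    have hdiff : κ / t - t ≠ 0 := by
      rw [div_sub' ht, div_ne_zero_iff, sub_ne_zero]
      exact ⟨by rwa [← sq, ne_comm], ht⟩
    have h := hinv t ht
    rw [hfg t ht, hfg _ (div_ne_zero hκ ht), joukowski_div hκ] at h
    exact (mul_eq_zero.mp (by linear_combination h : (κ / t - t) * _ = 0)).resolve_left hdiff
  · rintro ⟨h, hh⟩ t ht
    rw [hh _ (div_ne_zero hκ ht), hh t ht, joukowski_div hκ]

theorem exists_eval_eq_iff_of_affine {ψ χ : F → F} {B C₀ : F}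
    (hB : B ≠ 0) (hχ : ∀ t ≠ 0, χ t = B * ψ t - C₀) (φ : F → F) :
    (∃ h : F[X], ∀ t ≠ 0, φ t = h.eval (ψ t)) ↔ ∃ h : F[X], ∀ t ≠ 0, φ t = h.eval (χ t) := by
  constructor
  · rintro ⟨h, hh⟩
    refine ⟨h.comp (C B⁻¹ * (X + C C₀)), fun t ht => ?_⟩
    rw [hh t ht, eval_comp, hχ t ht]
    simp [hB]
  · rintro ⟨h, hh⟩
    refine ⟨h.comp (C B * X - C C₀), fun t ht => ?_⟩
    rw [hh t ht, eval_comp, hχ t ht]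
    simp

end Joukowski

theorem lamHalf_eq_joukowski {abcd q2 : ℂ} (habcd : abcd ≠ 0) (hq2 : q2 ≠ 0) (j : ℤ) {t : ℂ}
    (ht : t ≠ 0) :
    lamHalf abcd q2 j t =
      abcd * q2 ^ (-j - 2) * joukowski ((q2 ^ 2) ^ (j + 1) / abcd) t - (abcd / q2 ^ 2 + 1) := by
  have hpow : (q2 ^ 2) ^ (j + 1) = q2 ^ j * q2 ^ (j + 2) := by
    rw [← zpow_natCast, ← zpow_mul, ← zpow_add₀ hq2]
    ring_nf
  rw [lamHalf, joukowski, hpow, show -j - 2 = -(j + 2) by ring, zpow_neg,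
    show q2 ^ j = q2 ^ (j + 2) / q2 ^ 2 by rw [← zpow_natCast, ← zpow_sub₀ hq2]; ring_nf]
  have : q2 ^ (j + 2) ≠ 0 := zpow_ne_zero _ hq2
  field_simp
  ring

theorem invariant_Laurent_polynomials_are_polynomials_in_lambda_general
    (q q2 : ℝ) (hq2pos : 0 < q2) (hq2 : q2 ^ 2 = q)
    (a b c d : ℂ) (ha : a ≠ 0) (hb : b ≠ 0) (hc : c ≠ 0) (hd : d ≠ 0)
    (j : ℤ)
    -- the Laurent polynomial `r(t) = p(t)/t^M`
    (p : Polynomial ℂ) (M : ℕ) :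
    ((∀ t : ℂ, t ≠ 0 →
        Polynomial.eval ((q : ℂ) ^ (j + 1) / (a * b * c * d * t)) p /
            ((q : ℂ) ^ (j + 1) / (a * b * c * d * t)) ^ M =
          Polynomial.eval t p / t ^ M) ↔
      ∃ h : Polynomial ℂ, ∀ t : ℂ, t ≠ 0 →
        Polynomial.eval t p / t ^ M =
          Polynomial.eval (lamHalf (a * b * c * d) (q2 : ℂ) j t) h) ∧
    -- in particular `λ_{n-j/2}` itself is invariant under `I^{(j)}`
    (∀ t : ℂ, t ≠ 0 →
      lamHalf (a * b * c * d) (q2 : ℂ) j ((q : ℂ) ^ (j + 1) / (a * b * c * d * t)) =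
        lamHalf (a * b * c * d) (q2 : ℂ) j t) := by
  have habcd : a * b * c * d ≠ 0 := by simp [ha, hb, hc, hd]
  have hq2' : (q2 : ℂ) ≠ 0 := by exact_mod_cast hq2pos.ne'
  have hq : (q : ℂ) = (q2 : ℂ) ^ 2 := by exact_mod_cast hq2.symm
  have hκ : (q : ℂ) ^ (j + 1) / (a * b * c * d) ≠ 0 := by
    rw [hq]
    exact div_ne_zero (zpow_ne_zero _ (pow_ne_zero _ hq2')) habcd
  have hB : a * b * c * d * (q2 : ℂ) ^ (-j - 2) ≠ 0 := mul_ne_zero habcd (zpow_ne_zero _ hq2')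
  have hlam := fun t (ht : t ≠ 0) => hq ▸ lamHalf_eq_joukowski habcd hq2' j ht
  have hsub : ∀ t : ℂ, (q : ℂ) ^ (j + 1) / (a * b * c * d * t) =
      (q : ℂ) ^ (j + 1) / (a * b * c * d) / t := fun t => (div_div _ _ _).symm
  simp only [hsub]
  refine ⟨(invariant_iff_exists_eval_joukowski hκ
      (IsJoukowskiDecomposable.laurent hκ p M)).trans
      (exists_eval_eq_iff_of_affine hB hlam _), fun t ht => ?_⟩
  rw [hlam _ (div_ne_zero hκ ht), hlam t ht, joukowski_div hκ]

theorem invariant_Laurent_polynomials_are_polynomials_in_lambda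
    (q q2 : ℝ) (hq0 : 0 < q) (hq1 : q < 1) (hq2pos : 0 < q2) (hq2 : q2 ^ 2 = q)
    (a b c d : ℂ) (ha : a ≠ 0) (hb : b ≠ 0) (hc : c ≠ 0) (hd : d ≠ 0)
    (j : ℤ)
    -- the Laurent polynomial `r(t) = p(t)/t^M`
    (p : Polynomial ℂ) (M : ℕ) :
    ((∀ t : ℂ, t ≠ 0 →
        Polynomial.eval ((q : ℂ) ^ (j + 1) / (a * b * c * d * t)) p /
            ((q : ℂ) ^ (j + 1) / (a * b * c * d * t)) ^ M =
          Polynomial.eval t p / t ^ M) ↔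
      ∃ h : Polynomial ℂ, ∀ t : ℂ, t ≠ 0 →
        Polynomial.eval t p / t ^ M =
          Polynomial.eval (lamHalf (a * b * c * d) (q2 : ℂ) j t) h) ∧
    -- in particular `λ_{n-j/2}` itself is invariant under `I^{(j)}`
    (∀ t : ℂ, t ≠ 0 →
      lamHalf (a * b * c * d) (q2 : ℂ) j ((q : ℂ) ^ (j + 1) / (a * b * c * d * t)) =
        lamHalf (a * b * c * d) (q2 : ℂ) j t) :=
  invariant_Laurent_polynomials_are_polynomials_in_lambda_general q q2 hq2pos hq2 a b c d ha hb hc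
    hd j p M
end

section
/- For all integers 1 ≤ i ≤ k and 1 ≤ j ≤ k, the involution I^{(k−1)} reverses the row index of the κ-factors: I^{(k−1)}(κ^{b;i,j}_n) = κ^{b;k−i+1,j}_n as Laurent polynomials in t = q^n; the same identity holds for κ^{c;i,j}_n and κ^{d;i,j}_n. (Equation (5.3).) -/
open scoped BigOperators

open AW

/-!
Substituting `t ↦ q^k/(abcd t)` turns the factors of `κ^{b;i,j}` into
`(q/(bd t), q/(bc t); q)_{k-i}` and `(q^{k-i+1}/(ad t), q^{k-i+1}/(ac t); q)_{i-1}`.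
Reading `(x;q)_N` backwards, `(x;q)_N = (-x)^N q^{N(N-1)/2} (q^{1-N}/x;q)_N`, turns these into
exactly the factors of `κ^{b;k+1-i,j}`, with the two pairs swapping roles; the leftover monomial
in `a, b, c, d, t, q` is the ratio of the two prefactors. The cases `c` and `d` are the case `b`
with the parameters permuted.
-/

namespace AW

variable {q : ℂ}

theorem qpoch_succ (u : ℂ) (n : ℕ) : qpoch q u (n + 1) = qpoch q u n * (1 - u * q ^ n) :=
  Finset.prod_range_succ _ _

theorem qpoch_succ' (u : ℂ) (n : ℕ) : qpoch q u (n + 1) = (1 - u) * qpoch q (u * q) n := by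
  rw [qpoch, Finset.prod_range_succ', mul_comm, qpoch]
  simp only [pow_zero, mul_one, pow_succ', mul_assoc]

/-- `x' = q^{1-n}/x`, so the factors `1 - x q^l` and `1 - x' q^{n-1-l}` differ by `-x q^l`. -/
theorem qpoch_mul_qpoch_reflect (hq : q ≠ 0) {x y x' y' : ℂ} {n : ℕ}
    (hx : x * x' * q ^ n = q) (hy : y * y' * q ^ n = q) :
    qpoch q x n * qpoch q y n =
      (x * y * q ^ n) ^ n / q ^ n * (qpoch q x' n * qpoch q y' n) := by
  induction n generalizing x' y' with
  | zero => simp [qpoch]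
  | succ n ih =>
    have hx1 : x * x' * q ^ n = 1 := mul_right_cancel₀ hq (by linear_combination hx)
    have hy1 : y * y' * q ^ n = 1 := mul_right_cancel₀ hq (by linear_combination hy)
    rw [qpoch_succ, qpoch_succ, qpoch_succ' x', qpoch_succ' y',
      mul_mul_mul_comm, ih (x' := x' * q) (y' := y' * q) (by linear_combination q * hx1)
        (by linear_combination q * hy1)]
    have hlast : (1 - x * q ^ n) * (1 - y * q ^ n) =
        x * y * q ^ (2 * n) * (1 - x') * (1 - y') := by
      linear_combination (y * q ^ n - y * y' * q ^ n) * hx1 + (x * q ^ n - 1) * hy1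
    field_simp
    linear_combination
      (x * y * q ^ n) ^ n * qpoch q (x' * q) n * qpoch q (q * y') n * q ^ (n + 1) * hlast

theorem kapB_reflect (hq : q ≠ 0) {a b c d t : ℂ} (ha : a ≠ 0) (hb : b ≠ 0) (hc : c ≠ 0)
    (hd : d ≠ 0) (ht : t ≠ 0) {k i : ℕ} (j : ℕ) (hi1 : 1 ≤ i) (hik : i ≤ k) :
    kapB q a b c d k i j (q ^ (k : ℤ) / (a * b * c * d * t)) =
      kapB q a b c d k (k + 1 - i) j t := by
  obtain ⟨m, rfl⟩ : ∃ m, i = m + 1 := ⟨i - 1, by omega⟩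
  obtain ⟨n, rfl⟩ : ∃ n, k = n + m + 1 := ⟨k - (m + 1), by omega⟩
  have hrow : n + m + 1 + 1 - (m + 1) = n + 1 := by omega
  have hlen : n + m + 1 - (m + 1) = n := by omega
  have hlen' : n + m + 1 - (n + 1) = m := by omega
  have e1 : -(((n + m + 1 : ℕ) : ℤ) - 1) = -((n + m : ℕ) : ℤ) := by push_cast; ring
  have e2 : (1 : ℤ) - ((n + m + 1 : ℕ) : ℤ) = -((n + m : ℕ) : ℤ) := by push_cast; ring
  have e3 : (1 : ℤ) - ((m + 1 : ℕ) : ℤ) = -(m : ℤ) := by push_cast; ring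
  have e4 : (1 : ℤ) - ((n + 1 : ℕ) : ℤ) = -(n : ℤ) := by push_cast; ring
  simp only [kapB, hrow, hlen, hlen', Nat.add_sub_cancel, e1, e2, e3, e4,
    zpow_sub₀ (div_ne_zero hb ha), zpow_neg, zpow_natCast]
  set s := q ^ (n + m + 1) / (a * b * c * d * t) with hs
  rw [qpoch_mul_qpoch_reflect hq (x' := b * d * t * (q ^ n)⁻¹) (y' := b * c * t * (q ^ n)⁻¹)
      (by rw [hs]; field_simp; ring) (by rw [hs]; field_simp; ring),
    qpoch_mul_qpoch_reflect hq (x := b * c * s * (q ^ m)⁻¹) (y := b * d * s * (q ^ m)⁻¹)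
      (x' := a * d * t * (q ^ (n + m))⁻¹) (y' := a * c * t * (q ^ (n + m))⁻¹)
      (by rw [hs]; field_simp; ring) (by rw [hs]; field_simp; ring)]
  have hscalar : (s ^ (n + m))⁻¹ * (1 / (b / a) ^ (m + 1)) *
      ((a * c * s * (q ^ (n + m))⁻¹ * (a * d * s * (q ^ (n + m))⁻¹) * q ^ n) ^ n / q ^ n) *
      ((b * c * s * (q ^ m)⁻¹ * (b * d * s * (q ^ m)⁻¹) * q ^ m) ^ m / q ^ m) =
      (t ^ (n + m))⁻¹ * (1 / (b / a) ^ (n + 1)) := by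
    rw [hs]
    simp only [div_pow, mul_pow, inv_pow]
    field_simp
    ring
  linear_combination (b / a) ^ j * qpoch q (b * d * t * (q ^ n)⁻¹) n *
    qpoch q (b * c * t * (q ^ n)⁻¹) n * qpoch q (a * d * t * (q ^ (n + m))⁻¹) m *
    qpoch q (a * c * t * (q ^ (n + m))⁻¹) m * hscalar

end AW

theorem involution_reverses_kappa_row_index_general
    (q : ℝ) (hq0 : 0 < q)
    (a b c d : ℂ) (ha : a ≠ 0) (hb : b ≠ 0) (hc : c ≠ 0) (hd : d ≠ 0)
    (k : ℕ)
    (i j : ℕ) (hi1 : 1 ≤ i) (hik : i ≤ k) :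
    ∀ t : ℂ, t ≠ 0 →
      kapB (q : ℂ) a b c d k i j ((q : ℂ) ^ (k : ℤ) / (a * b * c * d * t)) =
          kapB (q : ℂ) a b c d k (k + 1 - i) j t ∧
      kapB (q : ℂ) a c b d k i j ((q : ℂ) ^ (k : ℤ) / (a * b * c * d * t)) =
          kapB (q : ℂ) a c b d k (k + 1 - i) j t ∧
      kapB (q : ℂ) a d c b k i j ((q : ℂ) ^ (k : ℤ) / (a * b * c * d * t)) =
          kapB (q : ℂ) a d c b k (k + 1 - i) j t := by
  intro t ht
  have hq : (q : ℂ) ≠ 0 := Complex.ofReal_ne_zero.mpr hq0.ne'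
  refine ⟨kapB_reflect hq ha hb hc hd ht j hi1 hik, ?_, ?_⟩
  · rw [show a * b * c * d = a * c * b * d by ring]
    exact kapB_reflect hq ha hc hb hd ht j hi1 hik
  · rw [show a * b * c * d = a * d * c * b by ring]
    exact kapB_reflect hq ha hd hc hb ht j hi1 hik

theorem involution_reverses_kappa_row_index
    (q : ℝ) (hq0 : 0 < q) (hq1 : q < 1)
    (a b c d : ℂ) (ha : a ≠ 0) (hb : b ≠ 0) (hc : c ≠ 0) (hd : d ≠ 0)
    (k : ℕ) (hk : 1 ≤ k)
    (i j : ℕ) (hi1 : 1 ≤ i) (hik : i ≤ k) (hj1 : 1 ≤ j) (hjk : j ≤ k) :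
    ∀ t : ℂ, t ≠ 0 →
      kapB (q : ℂ) a b c d k i j ((q : ℂ) ^ (k : ℤ) / (a * b * c * d * t)) =
          kapB (q : ℂ) a b c d k (k + 1 - i) j t ∧
      kapB (q : ℂ) a c b d k i j ((q : ℂ) ^ (k : ℤ) / (a * b * c * d * t)) =
          kapB (q : ℂ) a c b d k (k + 1 - i) j t ∧
      kapB (q : ℂ) a d c b k i j ((q : ℂ) ^ (k : ℤ) / (a * b * c * d * t)) =
          kapB (q : ℂ) a d c b k (k + 1 - i) j t :=
  involution_reverses_kappa_row_index_general q hq0 a b c d ha hb hc hd k i j hi1 hik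
end

section
/- Fix an integer k ≥ 0. For every polynomial r̄ ∈ ℂ[y] there exists a polynomial r ∈ ℂ[y], unique up to an additive constant, such that r(λ_{n−k/2}) − r(λ_{n−k/2−1}) = (λ_{n−k/2} − λ_{n−k/2−1})·r̄(λ_{n−(k+1)/2}) as Laurent polynomials in t = q^n. Conversely, for every polynomial r ∈ ℂ[y] there exists r̄ ∈ ℂ[y] with this property. The resulting linear map r ↦ r̄ (a discrete analog of differentiation) maps ℂ[y] onto ℂ[y] and its kernel consists exactly of the constant polynomials. -/
/-!
Write `u, m, w` for `λ_{n-k/2}, λ_{n-(k+1)/2}, λ_{n-k/2-1}` as functions of `t = q^n`, and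
`s = q^{1/2}`. A direct computation shows that `u + w` and `u w` are polynomials in `m`, of
degree one with leading coefficient `s + s⁻¹` and of degree two and monic respectively. Hence
`u^n - w^n = (u - w) U_n(m)` for the Lucas polynomials `U_n` of this pair, and `r ↦ r̄` is the
linear map `X^n ↦ U_n`. Since `U_{n+1}` has degree `n` and leading coefficient
`(s^{n+1} - s^{-n-1}) / (s - s⁻¹) ≠ 0`, this map is triangular and onto.
For the kernel, `w(t) = u(t/q)`, so `r(u) = r(w)` makes `r(u(q^n))` independent of `n`;
as `q^n → 0`, `u(q^n) → ∞`, which forces `r` to be constant.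
-/


open scoped BigOperators

open AW

open Polynomial Filter Topology

section Lucas

variable {R : Type*} [CommRing R]

def lucas (S P : R) : ℕ → R
  | 0 => 0
  | 1 => 1
  | n + 2 => S * lucas S P (n + 1) - P * lucas S P n

@[simp] lemma lucas_zero (S P : R) : lucas S P 0 = 0 := rfl

@[simp] lemma lucas_one (S P : R) : lucas S P 1 = 1 := rfl

lemma lucas_add_two (S P : R) (n : ℕ) :
    lucas S P (n + 2) = S * lucas S P (n + 1) - P * lucas S P n := rfl

lemma map_lucas {R' : Type*} [CommRing R'] (f : R →+* R') (S P : R) (n : ℕ) :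
    f (lucas S P n) = lucas (f S) (f P) n := by
  induction n using Nat.twoStepInduction with
  | zero => simp
  | one => simp
  | more n ih₁ ih₂ => simp [lucas_add_two, ih₁, ih₂]

lemma pow_sub_pow_eq_mul_lucas (u w : R) (n : ℕ) :
    u ^ n - w ^ n = (u - w) * lucas (u + w) (u * w) n := by
  induction n using Nat.twoStepInduction with
  | zero => simp
  | one => simp
  | more n ih₁ ih₂ =>
    rw [lucas_add_two, mul_sub, ← mul_left_comm, ← ih₂, ← mul_left_comm, ← ih₁]
    ring

lemma lucas_add_inv_ne_zero {K : Type*} [Field K] {x : K} (hx : x ≠ 0) {n : ℕ}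
    (h : x ^ n ≠ x⁻¹ ^ n) : lucas (x + x⁻¹) 1 n ≠ 0 := by
  intro h0
  have := pow_sub_pow_eq_mul_lucas x x⁻¹ n
  rw [mul_inv_cancel₀ hx, h0, mul_zero, sub_eq_zero] at this
  exact h this

lemma natDegree_lucas_le_and_coeff {S P : R[X]} (hS : S.natDegree ≤ 1) (hP : P.natDegree ≤ 2)
    (n : ℕ) : (lucas S P (n + 1)).natDegree ≤ n ∧
      (lucas S P (n + 1)).coeff n = lucas (S.coeff 1) (P.coeff 2) (n + 1) := by
  induction n using Nat.twoStepInduction with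
  | zero => simp
  | one => simp [lucas_add_two, hS]
  | more n ih₁ ih₂ =>
    obtain ⟨hdeg₁, hcoeff₁⟩ := ih₁
    obtain ⟨hdeg₂, hcoeff₂⟩ := ih₂
    rw [lucas_add_two]
    refine ⟨(natDegree_sub_le _ _).trans (max_le ?_ ?_), ?_⟩
    · exact natDegree_mul_le_of_le hS hdeg₂ |>.trans (by omega)
    · exact natDegree_mul_le_of_le hP hdeg₁ |>.trans (by omega)
    · have hSL := coeff_mul_add_eq_of_natDegree_le hS hdeg₂
      have hPL := coeff_mul_add_eq_of_natDegree_le hP hdeg₁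
      rw [show 1 + (n + 1) = n + 2 by omega] at hSL
      rw [show 2 + n = n + 2 by omega] at hPL
      rw [coeff_sub, hSL, hPL, hcoeff₁, hcoeff₂, lucas_add_two _ _ (n + 1)]

noncomputable def lucasDeriv (S P : R[X]) : R[X] →ₗ[R] R[X] :=
  lsum fun n => LinearMap.toSpanSingleton R R[X] (lucas S P n)

lemma lucasDeriv_monomial (S P : R[X]) (n : ℕ) (a : R) :
    lucasDeriv S P (monomial n a) = a • lucas S P n := by
  simp [lucasDeriv]

lemma eval_sub_eval_eq_mul_eval_lucasDeriv {S P : R[X]} {u w m : R} (hS : S.eval m = u + w)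
    (hP : P.eval m = u * w) (r : R[X]) :
    r.eval u - r.eval w = (u - w) * (lucasDeriv S P r).eval m := by
  induction r using Polynomial.induction_on' with
  | add p q hp hq => rw [map_add, eval_add, eval_add, eval_add, mul_add, ← hp, ← hq]; ring
  | monomial n a =>
    have hL : (lucas S P n).eval m = lucas (u + w) (u * w) n := by
      rw [← hS, ← hP, ← coe_evalRingHom, map_lucas]
    rw [lucasDeriv_monomial, eval_smul, hL, eval_monomial, eval_monomial, ← mul_sub,
      pow_sub_pow_eq_mul_lucas, smul_eq_mul]
    ring

end Lucas

lemma Polynomial.surjective_of_degree_apply_X_pow {K : Type*} [Field K]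
    (D : K[X] →ₗ[K] K[X]) (hD : ∀ n : ℕ, (D (X ^ (n + 1))).degree = n) :
    Function.Surjective D := by
  suffices h : ∀ n : ℕ, ∀ p : K[X], p.degree < n → ∃ r, D r = p from
    fun p => h _ p (degree_le_natDegree.trans_lt (by exact_mod_cast p.natDegree.lt_succ_self))
  intro n
  induction n with
  | zero => exact fun p hp => ⟨0, by rw [map_zero, eq_comm, ← degree_eq_bot]; simpa using hp⟩
  | succ n ih =>
    intro p hp
    have hlead : (D (X ^ (n + 1))).coeff n ≠ 0 := coeff_ne_zero_of_eq_degree (hD n)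
    set γ := p.coeff n / (D (X ^ (n + 1))).coeff n
    obtain ⟨r, hr⟩ := ih (p - γ • D (X ^ (n + 1))) <| by
      rw [degree_lt_iff_coeff_zero]
      intro m hm
      rcases hm.eq_or_lt with rfl | hm
      · simp [γ, hlead]
      · rw [coeff_sub, coeff_smul, coeff_eq_zero_of_degree_lt (hp.trans_le (by exact_mod_cast hm)),
          coeff_eq_zero_of_degree_lt (by rw [hD n]; exact_mod_cast hm), smul_zero, sub_zero]
    exact ⟨r + γ • X ^ (n + 1), by rw [map_add, map_smul, hr, sub_add_cancel]⟩

lemma Polynomial.eq_C_of_eval_succ_eq {K : Type*} [NormedField K] (r : K[X]) {v : ℕ → K}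
    (hv : Tendsto (‖v ·‖) atTop atTop) (hr : ∀ n, r.eval (v (n + 1)) = r.eval (v n)) :
    r = C (r.coeff 0) := by
  refine eq_C_of_degree_le_zero (not_lt.mp fun hdeg => ?_)
  have hconst : ∀ n, r.eval (v n) = r.eval (v 0) := fun n => by
    induction n with
    | zero => rfl
    | succ n ih => rw [hr, ih]
  have := r.tendsto_norm_atTop hdeg hv
  simp only [hconst] at this
  exact not_tendsto_const_atTop _ _ this

namespace AW

lemma lamHalf_add_natCast (A s : ℂ) (hs : s ≠ 0) (j : ℤ) (i : ℕ) (t : ℂ) :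
    lamHalf A s (j + i) t = (s ^ j * s ^ i / t - 1) * (1 - A * t / (s ^ j * s ^ (i + 2))) := by
  rw [lamHalf, zpow_add₀ hs, show -(j + i) - 2 = -(j + (i + 2 : ℕ)) by push_cast; ring,
    zpow_neg, zpow_add₀ hs]
  simp only [zpow_natCast]
  ring

lemma lamHalf_add_two (A s : ℂ) (hs : s ≠ 0) (j : ℤ) (t : ℂ) :
    lamHalf A s (j + 2) t = lamHalf A s j (t / s ^ 2) := by
  have h := lamHalf_add_natCast A s hs j 2 t
  have h0 := lamHalf_add_natCast A s hs j 0 (t / s ^ 2)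
  push_cast at h h0
  rw [add_zero] at h0
  rw [h, h0]
  field_simp

lemma tendsto_norm_lamHalf_nhdsNE_zero (A s : ℂ) (hs : s ≠ 0) (j : ℤ) :
    Tendsto (fun t => ‖lamHalf A s j t‖) (𝓝[≠] 0) atTop := by
  have hfactor : ∀ t : ℂ, t ≠ 0 →
      ‖(s ^ j - t) * (1 - A * s ^ (-j - 2) * t)‖ * ‖t⁻¹‖ = ‖lamHalf A s j t‖ := by
    intro t ht
    rw [← norm_mul, lamHalf]
    field_simp
  have hnum : Tendsto (fun t => ‖(s ^ j - t) * (1 - A * s ^ (-j - 2) * t)‖) (𝓝[≠] 0)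
      (𝓝 ‖s ^ j‖) := by
    refine tendsto_nhdsWithin_of_tendsto_nhds ?_
    have : Continuous fun t : ℂ => ‖(s ^ j - t) * (1 - A * s ^ (-j - 2) * t)‖ := by fun_prop
    simpa using this.tendsto 0
  exact (hnum.pos_mul_atTop (norm_pos_iff.mpr (zpow_ne_zero j hs))
    tendsto_norm_inv_nhdsNE_zero_atTop).congr' (eventually_nhdsWithin_of_forall hfactor)

noncomputable def lamHalfSum (A s : ℂ) : ℂ[X] :=
  C (s + s⁻¹) * X + C ((s - 1) ^ 2 * (s ^ 2 + A) / s ^ 3)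

noncomputable def lamHalfProd (A s : ℂ) : ℂ[X] :=
  X ^ 2 - C ((s - 1) ^ 2 * (s ^ 2 + A) / s ^ 3) * X
    + C ((A * s * (s ^ 2 - 1) ^ 2 - (s - 1) ^ 2 * (s ^ 2 + A) ^ 2) / s ^ 5)

lemma eval_lamHalfSum (A s : ℂ) (hs : s ≠ 0) (j : ℤ) (t : ℂ) (ht : t ≠ 0) :
    (lamHalfSum A s).eval (lamHalf A s (j + 1) t) = lamHalf A s j t + lamHalf A s (j + 2) t := by
  have h0 := lamHalf_add_natCast A s hs j 0 t
  have h1 := lamHalf_add_natCast A s hs j 1 t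
  have h2 := lamHalf_add_natCast A s hs j 2 t
  push_cast at h0 h1 h2
  rw [add_zero] at h0
  simp only [lamHalfSum, eval_add, eval_mul, eval_C, eval_X]
  rw [h0, h1, h2]
  have : s ^ j ≠ 0 := zpow_ne_zero j hs
  generalize s ^ j = e at *
  field_simp
  ring

lemma eval_lamHalfProd (A s : ℂ) (hs : s ≠ 0) (j : ℤ) (t : ℂ) (ht : t ≠ 0) :
    (lamHalfProd A s).eval (lamHalf A s (j + 1) t) = lamHalf A s j t * lamHalf A s (j + 2) t := by
  have h0 := lamHalf_add_natCast A s hs j 0 t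
  have h1 := lamHalf_add_natCast A s hs j 1 t
  have h2 := lamHalf_add_natCast A s hs j 2 t
  push_cast at h0 h1 h2
  rw [add_zero] at h0
  simp only [lamHalfProd, eval_add, eval_sub, eval_mul, eval_pow, eval_C, eval_X]
  rw [h0, h1, h2]
  have : s ^ j ≠ 0 := zpow_ne_zero j hs
  generalize s ^ j = e at *
  field_simp
  ring

noncomputable def lamHalfDeriv (A s : ℂ) : ℂ[X] →ₗ[ℂ] ℂ[X] :=
  lucasDeriv (lamHalfSum A s) (lamHalfProd A s)

lemma eval_sub_eval_lamHalf (A s : ℂ) (hs : s ≠ 0) (j : ℤ) (r : ℂ[X]) (t : ℂ) (ht : t ≠ 0) :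
    r.eval (lamHalf A s j t) - r.eval (lamHalf A s (j + 2) t) =
      (lamHalf A s j t - lamHalf A s (j + 2) t) *
        (lamHalfDeriv A s r).eval (lamHalf A s (j + 1) t) :=
  eval_sub_eval_eq_mul_eval_lucasDeriv (eval_lamHalfSum A s hs j t ht)
    (eval_lamHalfProd A s hs j t ht) r

lemma lamHalfDeriv_surjective (A : ℂ) {s : ℂ} (hs : s ≠ 0) (hs1 : ‖s‖ < 1) :
    Function.Surjective (lamHalfDeriv A s) := by
  refine surjective_of_degree_apply_X_pow _ fun n => ?_
  have hS : (lamHalfSum A s).natDegree ≤ 1 := by unfold lamHalfSum; compute_degree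
  have hP : (lamHalfProd A s).natDegree ≤ 2 := by unfold lamHalfProd; compute_degree
  have hσ : (lamHalfSum A s).coeff 1 = s + s⁻¹ := by simp [lamHalfSum]
  have hmonic : (lamHalfProd A s).coeff 2 = 1 := by simp [lamHalfProd]
  obtain ⟨hdeg, hcoeff⟩ := natDegree_lucas_le_and_coeff hS hP n
  have hpow : s ^ (n + 1) ≠ s⁻¹ ^ (n + 1) := by
    refine ne_of_apply_ne norm ?_
    rw [norm_pow, norm_pow, norm_inv]
    exact (pow_lt_one₀ (norm_nonneg s) hs1 n.succ_ne_zero).trans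
      (one_lt_pow₀ ((one_lt_inv₀ (norm_pos_iff.mpr hs)).mpr hs1) n.succ_ne_zero) |>.ne
  rw [lamHalfDeriv, X_pow_eq_monomial, lucasDeriv_monomial, one_smul]
  refine degree_eq_of_le_of_coeff_ne_zero (degree_le_of_natDegree_le hdeg) ?_
  rw [hcoeff, hσ, hmonic]
  exact lucas_add_inv_ne_zero hs hpow

lemma eq_C_of_eval_lamHalf_eq (A : ℂ) {s : ℂ} (hs : s ≠ 0) (hs1 : ‖s‖ < 1) (j : ℤ) (r : ℂ[X])
    (hr : ∀ t : ℂ, t ≠ 0 → r.eval (lamHalf A s j t) = r.eval (lamHalf A s (j + 2) t)) :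
    r = C (r.coeff 0) := by
  have hs2 : s ^ 2 ≠ 0 := pow_ne_zero 2 hs
  have hpow : Tendsto (fun n : ℕ => (s ^ 2) ^ n) atTop (𝓝[≠] 0) :=
    tendsto_nhdsWithin_iff.mpr ⟨tendsto_pow_atTop_nhds_zero_of_norm_lt_one
      (by rw [norm_pow]; exact pow_lt_one₀ (norm_nonneg s) hs1 two_ne_zero),
      Eventually.of_forall fun n => pow_ne_zero n hs2⟩
  refine r.eq_C_of_eval_succ_eq ((tendsto_norm_lamHalf_nhdsNE_zero A s hs j).comp hpow) fun n => ?_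
  have h := hr _ (pow_ne_zero (n + 1) hs2)
  rwa [lamHalf_add_two A s hs, pow_succ, mul_div_cancel_right₀ _ hs2] at h

end AW

theorem discrete_differentiation_map_general
    (q q2 : ℝ) (hq1 : q < 1) (hq2pos : 0 < q2) (hq2 : q2 ^ 2 = q)
    (a b c d : ℂ)
    (k : ℕ) :
    -- (1)  for every `r̄` there is `r`, unique up to an additive constant, with
    --      `r(λ_{n-k/2}) - r(λ_{n-k/2-1}) = (λ_{n-k/2} - λ_{n-k/2-1}) r̄(λ_{n-(k+1)/2})`
    (∀ rbar : Polynomial ℂ, ∃ r : Polynomial ℂ,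
      (∀ t : ℂ, t ≠ 0 →
        Polynomial.eval (lamHalf (a * b * c * d) (q2 : ℂ) (k : ℤ) t) r -
            Polynomial.eval (lamHalf (a * b * c * d) (q2 : ℂ) ((k : ℤ) + 2) t) r =
          (lamHalf (a * b * c * d) (q2 : ℂ) (k : ℤ) t -
              lamHalf (a * b * c * d) (q2 : ℂ) ((k : ℤ) + 2) t) *
            Polynomial.eval (lamHalf (a * b * c * d) (q2 : ℂ) ((k : ℤ) + 1) t) rbar) ∧
      ∀ r' : Polynomial ℂ,
        (∀ t : ℂ, t ≠ 0 →
          Polynomial.eval (lamHalf (a * b * c * d) (q2 : ℂ) (k : ℤ) t) r' -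
              Polynomial.eval (lamHalf (a * b * c * d) (q2 : ℂ) ((k : ℤ) + 2) t) r' =
            (lamHalf (a * b * c * d) (q2 : ℂ) (k : ℤ) t -
                lamHalf (a * b * c * d) (q2 : ℂ) ((k : ℤ) + 2) t) *
              Polynomial.eval (lamHalf (a * b * c * d) (q2 : ℂ) ((k : ℤ) + 1) t) rbar) →
        ∃ c0 : ℂ, r' = r + Polynomial.C c0) ∧
    -- (2)  conversely, for every `r` there exists `r̄`
    (∀ r : Polynomial ℂ, ∃ rbar : Polynomial ℂ, ∀ t : ℂ, t ≠ 0 →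
      Polynomial.eval (lamHalf (a * b * c * d) (q2 : ℂ) (k : ℤ) t) r -
          Polynomial.eval (lamHalf (a * b * c * d) (q2 : ℂ) ((k : ℤ) + 2) t) r =
        (lamHalf (a * b * c * d) (q2 : ℂ) (k : ℤ) t -
            lamHalf (a * b * c * d) (q2 : ℂ) ((k : ℤ) + 2) t) *
          Polynomial.eval (lamHalf (a * b * c * d) (q2 : ℂ) ((k : ℤ) + 1) t) rbar) ∧
    -- (3)  the kernel of `r ↦ r̄` consists exactly of the constants
    (∀ r : Polynomial ℂ,
      (∀ t : ℂ, t ≠ 0 →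
        Polynomial.eval (lamHalf (a * b * c * d) (q2 : ℂ) (k : ℤ) t) r =
          Polynomial.eval (lamHalf (a * b * c * d) (q2 : ℂ) ((k : ℤ) + 2) t) r) →
      ∃ c0 : ℂ, r = Polynomial.C c0) := by
  set A := a * b * c * d
  have hs : (q2 : ℂ) ≠ 0 := Complex.ofReal_ne_zero.mpr hq2pos.ne'
  have hs1 : ‖(q2 : ℂ)‖ < 1 := by
    rw [Complex.norm_real, Real.norm_of_nonneg hq2pos.le]
    nlinarith
  have hrel := eval_sub_eval_lamHalf A _ hs k
  have hker := eq_C_of_eval_lamHalf_eq A hs hs1 k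
  refine ⟨fun rbar => ?_, fun r => ⟨lamHalfDeriv A q2 r, hrel r⟩,
    fun r hr => ⟨_, hker r hr⟩⟩
  obtain ⟨r, rfl⟩ := lamHalfDeriv_surjective A hs hs1 rbar
  refine ⟨r, hrel r, fun r' hr' => ⟨(r' - r).coeff 0, ?_⟩⟩
  have hdiff : r' - r = C ((r' - r).coeff 0) := hker (r' - r) fun t ht => by
    rw [eval_sub, eval_sub, sub_eq_sub_iff_sub_eq_sub, hr' t ht, hrel r t ht]
  rw [← hdiff, add_sub_cancel]

theorem discrete_differentiation_map
    (q q2 : ℝ) (hq0 : 0 < q) (hq1 : q < 1) (hq2pos : 0 < q2) (hq2 : q2 ^ 2 = q)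
    (a b c d : ℂ) (ha : a ≠ 0) (hb : b ≠ 0) (hc : c ≠ 0) (hd : d ≠ 0)
    (k : ℕ) :
    -- (1)  for every `r̄` there is `r`, unique up to an additive constant, with
    --      `r(λ_{n-k/2}) - r(λ_{n-k/2-1}) = (λ_{n-k/2} - λ_{n-k/2-1}) r̄(λ_{n-(k+1)/2})`
    (∀ rbar : Polynomial ℂ, ∃ r : Polynomial ℂ,
      (∀ t : ℂ, t ≠ 0 →
        Polynomial.eval (lamHalf (a * b * c * d) (q2 : ℂ) (k : ℤ) t) r -
            Polynomial.eval (lamHalf (a * b * c * d) (q2 : ℂ) ((k : ℤ) + 2) t) r =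
          (lamHalf (a * b * c * d) (q2 : ℂ) (k : ℤ) t -
              lamHalf (a * b * c * d) (q2 : ℂ) ((k : ℤ) + 2) t) *
            Polynomial.eval (lamHalf (a * b * c * d) (q2 : ℂ) ((k : ℤ) + 1) t) rbar) ∧
      ∀ r' : Polynomial ℂ,
        (∀ t : ℂ, t ≠ 0 →
          Polynomial.eval (lamHalf (a * b * c * d) (q2 : ℂ) (k : ℤ) t) r' -
              Polynomial.eval (lamHalf (a * b * c * d) (q2 : ℂ) ((k : ℤ) + 2) t) r' =
            (lamHalf (a * b * c * d) (q2 : ℂ) (k : ℤ) t -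
                lamHalf (a * b * c * d) (q2 : ℂ) ((k : ℤ) + 2) t) *
              Polynomial.eval (lamHalf (a * b * c * d) (q2 : ℂ) ((k : ℤ) + 1) t) rbar) →
        ∃ c0 : ℂ, r' = r + Polynomial.C c0) ∧
    -- (2)  conversely, for every `r` there exists `r̄`
    (∀ r : Polynomial ℂ, ∃ rbar : Polynomial ℂ, ∀ t : ℂ, t ≠ 0 →
      Polynomial.eval (lamHalf (a * b * c * d) (q2 : ℂ) (k : ℤ) t) r -
          Polynomial.eval (lamHalf (a * b * c * d) (q2 : ℂ) ((k : ℤ) + 2) t) r =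
        (lamHalf (a * b * c * d) (q2 : ℂ) (k : ℤ) t -
            lamHalf (a * b * c * d) (q2 : ℂ) ((k : ℤ) + 2) t) *
          Polynomial.eval (lamHalf (a * b * c * d) (q2 : ℂ) ((k : ℤ) + 1) t) rbar) ∧
    -- (3)  the kernel of `r ↦ r̄` consists exactly of the constants
    (∀ r : Polynomial ℂ,
      (∀ t : ℂ, t ≠ 0 →
        Polynomial.eval (lamHalf (a * b * c * d) (q2 : ℂ) (k : ℤ) t) r =
          Polynomial.eval (lamHalf (a * b * c * d) (q2 : ℂ) ((k : ℤ) + 2) t) r) →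
      ∃ c0 : ℂ, r = Polynomial.C c0) :=
  discrete_differentiation_map_general q q2 hq1 hq2pos hq2 a b c d k
end
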